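/- Let β ∈ ℝ and set c := −3β e₁e₂e₃ and d := β e₁e₂e₃ in Cl₉. Then q_{c,d}(e_i) := c²e_i + e_i d² − 2 c e_i d equals 16β² e_i for i ∈ {1,2,3} and 4β² e_i for i ∈ {4,…,9}; equivalently q_{c,d}(v) = −Bv for all v ∈ ℝ⁹, where B = −4β² diag(4,4,4,1,1,1,1,1,1). -/
import Mathlib


/-- The negative definite quadratic form on `ℝ⁹`, so that in its Clifford algebra
`e_i e_j + e_j e_i = −2δ_{ij}`. -/
noncomputable def Q9 : QuadraticForm ℝ (Fin 9 → ℝ) :=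
  QuadraticMap.weightedSumSquares ℝ (fun _ : Fin 9 => (-1 : ℝ))

/-- The Clifford algebra `Cl₉`. -/
abbrev Cl9 : Type := CliffordAlgebra Q9

/-- The canonical embedding `ℝ⁹ → Cl₉`. -/
noncomputable def ι (v : Fin 9 → ℝ) : Cl9 := CliffordAlgebra.ι Q9 v

/-- The generators `e₁, …, e₉` of `Cl₉` (0-indexed: `e i` is `e_{i+1}`). -/
noncomputable def e (i : Fin 9) : Cl9 := ι (Pi.single i 1)

/-- The symmetric map `B = −4β² diag(4,4,4,1,1,1,1,1,1)`. -/
noncomputable def B12 (β : ℝ) : Matrix (Fin 9) (Fin 9) ℝ :=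
  Matrix.diagonal fun i => (-4 * β ^ 2) * (if (i : ℕ) < 3 then 4 else 1)

lemma Q9_single (i : Fin 9) : Q9 (Pi.single i 1) = -1 := by
  simp [Q9, QuadraticMap.weightedSumSquares_apply, Pi.single_apply]

lemma epolar {i j : Fin 9} (h : i ≠ j) :
    QuadraticMap.polar Q9 (Pi.single i 1) (Pi.single j 1) = 0 := by
  simp only [QuadraticMap.polar, Q9, QuadraticMap.weightedSumSquares_apply, Pi.single_apply,
    Pi.add_apply, add_mul, mul_add, smul_eq_mul, mul_ite, ite_mul, mul_one, mul_zero, zero_mul,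
    one_mul, Finset.sum_add_distrib, Finset.sum_ite_eq', Finset.mem_univ, if_true, neg_mul]
  simp [Finset.sum_ite_eq', h, h.symm]

lemma esq (i : Fin 9) : e i * e i = -1 := by
  rw [e, ι, CliffordAlgebra.ι_sq_scalar, Q9_single, map_neg, map_one]

lemma eswap {i j : Fin 9} (h : i < j) : e j * e i = -(e i * e j) := by
  have := CliffordAlgebra.ι_mul_ι_add_swap (Q := Q9) (Pi.single i 1) (Pi.single j 1)
  rw [epolar h.ne, map_zero] at this
  simp only [e, ι]; rw [eq_neg_iff_add_eq_zero, add_comm, this]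

lemma esq' (i : Fin 9) (x : Cl9) : e i * (e i * x) = -x := by
  rw [← mul_assoc, esq, neg_one_mul]

lemma eswap' {i j : Fin 9} (h : i < j) (x : Cl9) : e j * (e i * x) = -(e i * (e j * x)) := by
  rw [← mul_assoc, eswap h, neg_mul, mul_assoc]

/-- The map `x ↦ c²x + xd² − 2cxd` as a linear map. -/
noncomputable def qmap (c d : Cl9) : Cl9 →ₗ[ℝ] Cl9 where
  toFun x := c * c * x + x * (d * d) - 2 • (c * x * d)
  map_add' x y := by
    simp only [mul_add, add_mul, smul_add]
    abel
  map_smul' r x := by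
    simp only [mul_smul_comm, smul_mul_assoc, RingHom.id_apply, smul_sub, smul_add]
    rw [smul_comm]

set_option maxHeartbeats 1000000 in
lemma quadratic_on_basis (β : ℝ) (i : Fin 9) :
      ((-3 * β) • (e 0 * e 1 * e 2)) * ((-3 * β) • (e 0 * e 1 * e 2)) * e i
          + e i * ((β • (e 0 * e 1 * e 2)) * (β • (e 0 * e 1 * e 2)))
          - 2 • (((-3 * β) • (e 0 * e 1 * e 2)) * e i * (β • (e 0 * e 1 * e 2)))
        = (if (i : ℕ) < 3 then 16 * β ^ 2 else 4 * β ^ 2) • e i := by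
  by_cases h : (i : ℕ) < 3
  · have h3 : i = 0 ∨ i = 1 ∨ i = 2 := by revert h; revert i; decide
    rcases h3 with rfl | rfl | rfl <;>
      · simp [two_smul, two_mul, smul_add, smul_mul_assoc, mul_smul_comm, smul_smul,
          mul_assoc, esq, esq', eswap, eswap']
        module
  · have h0 : (0 : Fin 9) < i := by omega
    have h1 : (1 : Fin 9) < i := by omega
    have h2 : (2 : Fin 9) < i := by omega
    simp [two_smul, two_mul, smul_add, smul_mul_assoc, mul_smul_comm, smul_smul, mul_assoc,
      h, esq, esq', eswap, eswap', eswap' h0, eswap' h1, eswap' h2, eswap h0, eswap h1, eswap h2]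
    module

/-- For `c = −3β e₁e₂e₃` and `d = β e₁e₂e₃` in `Cl₉`, the map
`q_{c,d}(x) = c²x + xd² − 2cxd` satisfies `q_{c,d}(e_i) = 16β² e_i` for `i ∈ {1,2,3}`
and `q_{c,d}(e_i) = 4β² e_i` for `i ∈ {4,…,9}`; equivalently `q_{c,d}(v) = −Bv` for all
`v ∈ ℝ⁹` with `B = −4β² diag(4,4,4,1,…,1)`. -/
theorem quadratic_pair_maximal (β : ℝ) :
    (∀ i : Fin 9,
      ((-3 * β) • (e 0 * e 1 * e 2)) * ((-3 * β) • (e 0 * e 1 * e 2)) * e i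
          + e i * ((β • (e 0 * e 1 * e 2)) * (β • (e 0 * e 1 * e 2)))
          - 2 • (((-3 * β) • (e 0 * e 1 * e 2)) * e i * (β • (e 0 * e 1 * e 2)))
        = (if (i : ℕ) < 3 then 16 * β ^ 2 else 4 * β ^ 2) • e i) ∧
    (∀ v : Fin 9 → ℝ,
      ((-3 * β) • (e 0 * e 1 * e 2)) * ((-3 * β) • (e 0 * e 1 * e 2)) * ι v
          + ι v * ((β • (e 0 * e 1 * e 2)) * (β • (e 0 * e 1 * e 2)))
          - 2 • (((-3 * β) • (e 0 * e 1 * e 2)) * ι v * (β • (e 0 * e 1 * e 2)))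
        = -ι ((B12 β).mulVec v)) := by
  refine ⟨quadratic_on_basis β, ?_⟩
  set c : Cl9 := (-3 * β) • (e 0 * e 1 * e 2) with hc
  set d : Cl9 := β • (e 0 * e 1 * e 2) with hd
  have key : (qmap c d).comp (CliffordAlgebra.ι Q9)
      = -((CliffordAlgebra.ι Q9).comp ((B12 β).mulVecLin)) := by
    apply Module.Basis.ext (Pi.basisFun ℝ (Fin 9))
    intro i
    have hmv : (B12 β).mulVec (Pi.single i 1)
        = Pi.single i ((-4 * β ^ 2) * (if (i : ℕ) < 3 then 4 else 1)) := by
      funext k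
      simp only [B12, Matrix.mulVec_single, Matrix.diagonal_apply, Pi.single_apply]
      rcases eq_or_ne k i with rfl | hk
      · simp
      · simp [hk]
    simp only [LinearMap.comp_apply, LinearMap.neg_apply, Pi.basisFun_apply,
      Matrix.mulVecLin_apply, hmv, qmap, LinearMap.coe_mk, AddHom.coe_mk]
    have : (CliffordAlgebra.ι Q9) (Pi.single i ((-4 * β ^ 2) * (if (i : ℕ) < 3 then 4 else 1)))
        = ((-4 * β ^ 2) * (if (i : ℕ) < 3 then 4 else 1)) • e i := by
      rw [e, ι, ← map_smul]
      congr 1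
      funext k
      simp [Pi.single_apply, smul_eq_mul]
    rw [this]
    have hb := quadratic_on_basis β i
    rw [← hc, ← hd] at hb
    have hei : (CliffordAlgebra.ι Q9) (Pi.single i 1) = e i := rfl
    rw [hei, hb]
    split <;> · rw [← neg_smul]; congr 1; ring
  intro v
  have := congrArg (fun f => f v) key
  simpa [qmap, ι] using this
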